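/- (Correctness of the matrix-based frequency update in HT training.) Let t be a non-repeating decision tree over (d, m), let p be a leaf of t with path partial assignment Q_p and τ_p = |dom Q_p|, let s and ℓ_idx be two distinct features not in dom Q_p, let v : Fin (m s) and w : Fin (m ℓ_idx), and let Q' be Q_p updated so that Q' s = some v and Q' ℓ_idx = some w. Then for every batch of N samples D : Fin N → ((i : Fin d) → Fin (m i)), the number of indices n with ⟨enc (D n), mask Q'⟩ = τ_p + 2 equals the number of indices n such that the traversal of t on D n reaches leaf p and (D n) s = v and (D n) ℓ_idx = w; i.e., the count added to the frequency c_{(v,w)} of leaf p equals the number of batch samples classified into leaf p that carry value v for feature s and label value w. -/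

import Mathlib

/-- A decision tree over `(d, m)`: either a leaf, or a node labeled by a feature
`i : Fin d` together with `m i` child trees. -/
inductive DTree (d : ℕ) (m : Fin d → ℕ) : Type where
  | leaf : DTree d m
  | node (i : Fin d) (c : Fin (m i) → DTree d m) : DTree d m

namespace DTree

/-- Addresses of the leaves of a decision tree. -/
inductive LeafAddr {d : ℕ} {m : Fin d → ℕ} : DTree d m → Type where
  | here : LeafAddr .leaf
  | child {i : Fin d} {c : Fin (m i) → DTree d m} (j : Fin (m i)) :
      LeafAddr (c j) → LeafAddr (.node i c)

/-- The path partial assignment of a leaf: for each feature appearing on the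
root-to-leaf path, the child index taken at the node where it appears. -/
def pathQ {d : ℕ} {m : Fin d → ℕ} :
    {t : DTree d m} → t.LeafAddr → ((i : Fin d) → Option (Fin (m i)))
  | .leaf, .here => fun _ => none
  | .node _ c, .child j a => Function.update (pathQ a) _ (some j)

/-- Traversal of a tree on a sample: at a node labeled `i`, descend into the
child indexed by `a i`, until a leaf is reached. -/
def traverse {d : ℕ} {m : Fin d → ℕ} :
    (t : DTree d m) → ((i : Fin d) → Fin (m i)) → t.LeafAddr
  | .leaf, _ => .here
  | .node i c, a => .child (a i) ((c (a i)).traverse a)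

/-- Feature `i'` does not appear as a node label anywhere in the tree. -/
def NotContains {d : ℕ} {m : Fin d → ℕ} : DTree d m → Fin d → Prop
  | .leaf, _ => True
  | .node i c, i' => i ≠ i' ∧ ∀ j, (c j).NotContains i'

/-- No feature appears more than once on any root-to-leaf path. -/
def NonRepeating {d : ℕ} {m : Fin d → ℕ} : DTree d m → Prop
  | .leaf => True
  | .node i c => (∀ j, (c j).NotContains i) ∧ ∀ j, (c j).NonRepeating

end DTree

/-- A sample `a` is consistent with a partial assignment `Q`. -/
def Consistent {d : ℕ} {m : Fin d → ℕ} (a : (i : Fin d) → Fin (m i))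
    (Q : (i : Fin d) → Option (Fin (m i))) : Prop :=
  ∀ (i : Fin d) (j : Fin (m i)), Q i = some j → a i = j

/-- One-hot encoding of a sample `a`. -/
def enc {d : ℕ} {m : Fin d → ℕ} (a : (i : Fin d) → Fin (m i)) :
    (Σ i : Fin d, Fin (m i)) → ℕ :=
  fun p => if a p.1 = p.2 then 1 else 0

/-- Mask of a partial assignment `Q`. -/
def mask {d : ℕ} {m : Fin d → ℕ} (Q : (i : Fin d) → Option (Fin (m i))) :
    (Σ i : Fin d, Fin (m i)) → ℕ :=
  fun p => if Q p.1 = some p.2 then 1 else 0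

/-- Domain of a partial assignment. -/
def dom {d : ℕ} {m : Fin d → ℕ} (Q : (i : Fin d) → Option (Fin (m i))) : Finset (Fin d) :=
  Finset.univ.filter fun i => Q i ≠ none

/-- Inner product of two vectors indexed by feature/value pairs. -/
def ip {d : ℕ} {m : Fin d → ℕ} (u v : (Σ i : Fin d, Fin (m i)) → ℕ) : ℕ :=
  ∑ p : Σ i : Fin d, Fin (m i), u p * v p

open Classical in
lemma ip_enc_mask {d : ℕ} {m : Fin d → ℕ} (a : (i : Fin d) → Fin (m i))
    (Q : (i : Fin d) → Option (Fin (m i))) :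
    ip (enc a) (mask Q) = (Finset.univ.filter fun i => Q i = some (a i)).card := by
  classical
  unfold ip enc mask
  rw [← Finset.univ_sigma_univ, Finset.sum_sigma]
  have : ∀ i : Fin d,
      (∑ j : Fin (m i), (if a i = j then 1 else 0) * (if Q i = some j then 1 else 0))
        = (if Q i = some (a i) then 1 else 0) := by
    intro i
    rw [Finset.sum_eq_single (a i)]
    · simp
    · intro b _ hb; simp [Ne.symm hb]
    · simp
  simp only [this]
  rw [Finset.card_filter]

open Classical in
lemma ip_eq_card_iff {d : ℕ} {m : Fin d → ℕ} (a : (i : Fin d) → Fin (m i))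
    (Q : (i : Fin d) → Option (Fin (m i))) :
    ip (enc a) (mask Q) = (dom Q).card ↔ Consistent a Q := by
  classical
  rw [ip_enc_mask]
  have hsub : (Finset.univ.filter fun i => Q i = some (a i)) ⊆ dom Q := by
    intro i hi
    simp only [Finset.mem_filter, Finset.mem_univ, true_and] at hi
    simp [dom, hi]
  constructor
  · intro h i j hij
    have heq := Finset.eq_of_subset_of_card_le hsub (le_of_eq h.symm)
    have : i ∈ dom Q := by simp [dom]; simp [hij]
    rw [← heq] at this
    simp only [Finset.mem_filter, Finset.mem_univ, true_and] at this
    rw [hij] at this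
    exact (Option.some_injective _ this).symm
  · intro hc
    congr 1
    ext i
    simp only [Finset.mem_filter, Finset.mem_univ, true_and, dom]
    constructor
    · intro h; simp [h]
    · intro h
      obtain ⟨j, hj⟩ := Option.ne_none_iff_exists'.mp h
      rw [hj, hc i j hj]

lemma pathQ_of_notContains {d : ℕ} {m : Fin d → ℕ} {t : DTree d m} {i : Fin d}
    (h : t.NotContains i) (p : t.LeafAddr) : DTree.pathQ p i = none := by
  induction p with
  | here => rfl
  | child j q ih =>
    obtain ⟨h1, h2⟩ := h
    simp [DTree.pathQ, Function.update, (Ne.symm h1 : i ≠ _)]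
    exact ih (h2 j)

lemma traverse_eq_iff {d : ℕ} {m : Fin d → ℕ} {t : DTree d m}
    (ht : t.NonRepeating) (p : t.LeafAddr) (a : (i : Fin d) → Fin (m i)) :
    t.traverse a = p ↔ Consistent a (DTree.pathQ p) := by
  induction p with
  | here => simp [DTree.traverse, DTree.pathQ, Consistent]
  | @child i c j q ih =>
    obtain ⟨h1, h2⟩ := ht
    constructor
    · intro h
      simp only [DTree.traverse] at h
      injection h with _ _ hj hq
      subst hj
      have hq' := eq_of_heq hq
      have hcons : Consistent a (DTree.pathQ q) := (ih (h2 _)).mp hq'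
      intro i' j' hQ
      simp only [DTree.pathQ] at hQ
      by_cases hii : i' = i
      · subst hii
        rw [Function.update_self] at hQ
        exact Option.some_injective _ hQ
      · rw [Function.update_of_ne hii] at hQ
        exact hcons i' j' hQ
    · intro hc
      have haj : a i = j := hc i j (by simp [DTree.pathQ])
      subst haj
      have hcons : Consistent a (DTree.pathQ q) := by
        intro i' j' hQ
        have hii : i' ≠ i := by
          intro hii; subst hii
          rw [pathQ_of_notContains (h1 _) q] at hQ
          exact nomatch hQ
        exact hc i' j' (by simpa [DTree.pathQ, Function.update_of_ne hii] using hQ)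
      simp only [DTree.traverse]
      congr 1
      exact (ih (h2 _)).mpr hcons

open Classical in
theorem stmt_11 (d : ℕ) (hd : 1 ≤ d) (m : Fin d → ℕ) (hm : ∀ i, 1 ≤ m i)
    (t : DTree d m) (ht : t.NonRepeating) (p : t.LeafAddr) (τ : ℕ)
    (hτ : (dom (DTree.pathQ p)).card = τ)
    (s ℓidx : Fin d) (hsl : s ≠ ℓidx)
    (hs : s ∉ dom (DTree.pathQ p)) (hℓ : ℓidx ∉ dom (DTree.pathQ p))
    (v : Fin (m s)) (w : Fin (m ℓidx))
    (Q' : (i : Fin d) → Option (Fin (m i)))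
    (hQ' : Q' = Function.update (Function.update (DTree.pathQ p) s (some v)) ℓidx (some w))
    (N : ℕ) (D : Fin N → (i : Fin d) → Fin (m i)) :
    (Finset.univ.filter fun n : Fin N => ip (enc (D n)) (mask Q') = τ + 2).card =
    (Finset.univ.filter fun n : Fin N =>
        t.traverse (D n) = p ∧ (D n) s = v ∧ (D n) ℓidx = w).card := by
  classical
  set Qp := DTree.pathQ p with hQp
  have hQps : Qp s = none := by
    by_contra h; exact hs (by simp [dom, h])
  have hQpl : Qp ℓidx = none := by
    by_contra h; exact hℓ (by simp [dom, h])
  -- dom Q'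
  have hdom : dom Q' = insert ℓidx (insert s (dom Qp)) := by
    ext i
    simp only [dom, Finset.mem_filter, Finset.mem_univ, true_and, Finset.mem_insert, hQ']
    by_cases h1 : i = ℓidx
    · subst h1; simp [Function.update_self]
    · rw [Function.update_of_ne h1]
      by_cases h2 : i = s
      · subst h2; simp [Function.update_self, h1]
      · rw [Function.update_of_ne h2]; simp [h1, h2]
  have hcard : (dom Q').card = τ + 2 := by
    rw [hdom, Finset.card_insert_of_notMem, Finset.card_insert_of_notMem hs, hτ]
    simp only [Finset.mem_insert]
    rintro (h | h)
    · exact hsl h.symm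
    · exact hℓ h
  -- consistency decomposition
  have hdecomp : ∀ a : (i : Fin d) → Fin (m i),
      Consistent a Q' ↔ Consistent a Qp ∧ a s = v ∧ a ℓidx = w := by
    intro a
    constructor
    · intro h
      refine ⟨?_, ?_, ?_⟩
      · intro i j hij
        have hiℓ : i ≠ ℓidx := fun hh => by subst hh; rw [hQpl] at hij; exact nomatch hij
        have his : i ≠ s := fun hh => by subst hh; rw [hQps] at hij; exact nomatch hij
        exact h i j (by rw [hQ', Function.update_of_ne hiℓ, Function.update_of_ne his]; exact hij)
      · exact h s v (by rw [hQ', Function.update_of_ne hsl]; simp)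
      · exact h ℓidx w (by rw [hQ']; simp)
    · rintro ⟨hc, hv, hw⟩ i j hij
      rw [hQ'] at hij
      by_cases h1 : i = ℓidx
      · subst h1; rw [Function.update_self] at hij
        exact hw.trans (Option.some_injective _ hij)
      · rw [Function.update_of_ne h1] at hij
        by_cases h2 : i = s
        · subst h2; rw [Function.update_self] at hij
          exact hv.trans (Option.some_injective _ hij)
        · rw [Function.update_of_ne h2] at hij; exact hc i j hij
  congr 1
  apply Finset.filter_congr
  intro n _
  rw [← hcard, ip_eq_card_iff, hdecomp, ← traverse_eq_iff ht p]
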